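/- arXiv:2402.06860 — 2 statements merged into one kernel-verified Lean document; each statement's English description precedes it below -/
import Mathlib

section
/- Let $\mu, \alpha, w > 0$ and $k \ge 1$ an integer. Let $L$ be a Gamma$(k, \alpha)$ random variable (density $\frac{\alpha}{\Gamma(k)}(\alpha l)^{k-1}e^{-\alpha l}$ on $l \ge 0$), and independently let $Y = U + X$ where $U \sim \mathrm{Uniform}(-w,0)$ and $X \sim \mathrm{Exp}(\mu)$ are independent. Then $\Pr[Y \le L] = 1 - \frac{1 - e^{-\mu w}}{\mu w}\left(\frac{\alpha}{\alpha+\mu}\right)^k$. -/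
open MeasureTheory ProbabilityTheory Real

/-! Write `Y > L` as `X > L - U`. Since `L ≥ 0 ≥ U`, the exponential tail of `X`, independent of
`(L, U)`, gives `P(Y > L) = E[exp(-μ(L - U))]`, which by independence of `L` and `U` factors into
the Laplace transform `(α/(α+μ))^k` of the gamma law and the moment generating function
`(1 - exp(-μw))/(μw)` of the uniform law. -/

lemma expMeasure_Ioi {r t : ℝ} (hr : 0 < r) (ht : 0 ≤ t) :
    expMeasure r (Set.Ioi t) = ENNReal.ofReal (exp (-(r * t))) := by
  have := isProbabilityMeasure_expMeasure hr
  have hle : exp (-(r * t)) ≤ 1 := exp_le_one_iff.2 (neg_nonpos.2 (mul_nonneg hr.le ht))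
  rw [← Set.compl_Iic, prob_compl_eq_one_sub measurableSet_Iic, ← ofReal_cdf,
    cdf_expMeasure_eq hr, if_pos ht, ← ENNReal.ofReal_one, ← ENNReal.ofReal_sub _ (by linarith),
    sub_sub_cancel]

lemma ae_nonneg_gammaMeasure (a r : ℝ) : ∀ᵐ x ∂gammaMeasure a r, 0 ≤ x := by
  simp only [ae_iff, not_le]
  change gammaMeasure a r (Set.Iio 0) = 0
  rw [gammaMeasure, withDensity_apply _ measurableSet_Iio]
  exact lintegral_gammaPDF_of_nonpos le_rfl

lemma lintegral_exp_neg_mul_gammaMeasure {a r s : ℝ} (ha : 0 < a) (hr : 0 < r) (hrs : 0 < r + s) :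
    ∫⁻ x, ENNReal.ofReal (exp (-(s * x))) ∂gammaMeasure a r
      = ENNReal.ofReal ((r / (r + s)) ^ a) := by
  have hmeas (b : ℝ) : Measurable (gammaPDF a b) := (measurable_gammaPDFReal a b).ennreal_ofReal
  -- Tilting a gamma density by `exp(-s x)` gives a multiple of the gamma density with rate `r + s`.
  have hdensity : ∀ x, gammaPDF a r x * ENNReal.ofReal (exp (-(s * x)))
      = ENNReal.ofReal ((r / (r + s)) ^ a) * gammaPDF a (r + s) x := by
    intro x
    rcases lt_or_ge x 0 with hx | hx
    · simp [gammaPDF_of_neg hx]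
    · rw [gammaPDF_of_nonneg hx, gammaPDF_of_nonneg hx, ← ENNReal.ofReal_mul (by positivity),
        ← ENNReal.ofReal_mul (by positivity), div_rpow hr.le hrs.le, add_mul, neg_add, exp_add]
      congr 1
      field_simp
  rw [gammaMeasure, lintegral_withDensity_eq_lintegral_mul₀ (hmeas r).aemeasurable (by fun_prop)]
  simp only [Pi.mul_apply, hdensity]
  rw [lintegral_const_mul _ (hmeas (r + s)), lintegral_gammaPDF_eq_one ha hrs, mul_one]

lemma integral_exp_mul {a b s : ℝ} (hs : s ≠ 0) :
    ∫ x in a..b, exp (s * x) = (exp (s * b) - exp (s * a)) / s := by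
  rw [intervalIntegral.integral_comp_mul_left (fun x ↦ exp x) hs, integral_exp, smul_eq_mul,
    inv_mul_eq_div]

lemma lintegral_exp_mul_cond_Ioo {a b s : ℝ} (hab : a < b) (hs : s ≠ 0) :
    ∫⁻ x, ENNReal.ofReal (exp (s * x)) ∂(volume[|Set.Ioo a b])
      = ENNReal.ofReal ((exp (s * b) - exp (s * a)) / (s * (b - a))) := by
  have hint : IntegrableOn (fun x ↦ exp (s * x)) (Set.Ioc a b) :=
    (by fun_prop : Continuous fun x ↦ exp (s * x)).integrableOn_Ioc
  rw [ProbabilityTheory.cond, lintegral_smul_measure, Real.volume_Ioo,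
    Measure.restrict_congr_set Ioo_ae_eq_Ioc,
    ← ofReal_integral_eq_lintegral_ofReal hint (ae_of_all _ fun _ ↦ (exp_pos _).le),
    ← intervalIntegral.integral_of_le hab.le, integral_exp_mul hs,
    ← ENNReal.ofReal_inv_of_pos (sub_pos.2 hab), smul_eq_mul,
    ← ENNReal.ofReal_mul (inv_nonneg.2 (sub_pos.2 hab).le)]
  congr 1
  field_simp

section Independence

variable {Ω : Type*} [MeasurableSpace Ω] {P : Measure Ω}

lemma measure_lt_of_indepFun_of_map_eq_expMeasure [IsFiniteMeasure P] {Z X : Ω → ℝ} {r : ℝ}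
    (hr : 0 < r) (hZ : Measurable Z) (hX : Measurable X) (hZX : IndepFun Z X P)
    (hXlaw : P.map X = expMeasure r) (hZ_nonneg : ∀ᵐ ω ∂P, 0 ≤ Z ω) :
    P {ω | Z ω < X ω} = ∫⁻ ω, ENNReal.ofReal (exp (-(r * Z ω))) ∂P := by
  have hS : MeasurableSet {p : ℝ × ℝ | p.1 < p.2} :=
    measurableSet_lt measurable_fst measurable_snd
  have := isProbabilityMeasure_expMeasure hr
  calc P {ω | Z ω < X ω}
      = P.map (fun ω ↦ (Z ω, X ω)) {p | p.1 < p.2} :=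
        (Measure.map_apply (hZ.prodMk hX) hS).symm
    _ = ∫⁻ z, expMeasure r (Set.Ioi z) ∂P.map Z := by
      rw [(indepFun_iff_map_prod_eq_prod_map_map hZ.aemeasurable hX.aemeasurable).1 hZX, hXlaw,
        Measure.prod_apply hS]
      rfl
    _ = ∫⁻ z, ENNReal.ofReal (exp (-(r * z))) ∂P.map Z := by
      refine lintegral_congr_ae ?_
      filter_upwards [(ae_map_iff hZ.aemeasurable measurableSet_Ici).2 hZ_nonneg] with z hz
      exact expMeasure_Ioi hr hz
    _ = ∫⁻ ω, ENNReal.ofReal (exp (-(r * Z ω))) ∂P := lintegral_map (by fun_prop) hZ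

lemma lintegral_exp_neg_mul_sub_of_indepFun {L U : Ω → ℝ} (hL : Measurable L)
    (hU : Measurable U) (hLU : IndepFun L U P) (s : ℝ) :
    ∫⁻ ω, ENNReal.ofReal (exp (-(s * (L ω - U ω)))) ∂P
      = (∫⁻ x, ENNReal.ofReal (exp (-(s * x))) ∂P.map L)
        * ∫⁻ x, ENNReal.ofReal (exp (s * x)) ∂P.map U := by
  have hf : Measurable fun x ↦ ENNReal.ofReal (exp (-(s * x))) := by fun_prop
  have hg : Measurable fun x ↦ ENNReal.ofReal (exp (s * x)) := by fun_prop
  have hsplit (ω : Ω) : ENNReal.ofReal (exp (-(s * (L ω - U ω))))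
      = ENNReal.ofReal (exp (-(s * L ω))) * ENNReal.ofReal (exp (s * U ω)) := by
    rw [← ENNReal.ofReal_mul (exp_pos _).le, ← exp_add]
    ring_nf
  simp_rw [hsplit]
  rw [lintegral_map hf hL, lintegral_map hg hU]
  exact lintegral_mul_eq_lintegral_mul_lintegral_of_indepFun (hf.comp hL) (hg.comp hU)
    (hLU.comp hf hg)

end Independence

/-- For `L ~ Gamma(k, α)` independent of `Y = U + X` with `U ~ Uniform(-w,0)` and `X ~ Exp(μ)`
mutually independent, `Pr[Y ≤ L] = 1 - (1 - e^{-μw})/(μw) · (α/(α+μ))^k`. -/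
theorem prob_Y_le_L
    {Ω : Type*} [MeasureSpace Ω] [IsProbabilityMeasure (ℙ : Measure Ω)]
    (μ α w : ℝ) (hμ : 0 < μ) (hα : 0 < α) (hw : 0 < w) (k : ℕ) (hk : 1 ≤ k)
    (L U X : Ω → ℝ) (hLm : Measurable L) (hUm : Measurable U) (hXm : Measurable X)
    (hL : Measure.map L ℙ = gammaMeasure k α)
    (hU : pdf.IsUniform U (Set.Ioo (-w) 0) ℙ)
    (hX : Measure.map X ℙ = expMeasure μ)
    (hind : iIndepFun ![L, U, X] ℙ) :
    ℙ {ω | U ω + X ω ≤ L ω} =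
      ENNReal.ofReal (1 - (1 - exp (-μ * w)) / (μ * w) * (α / (α + μ)) ^ k) := by
  have hmeas : ∀ i, Measurable (![L, U, X] i) := fun i ↦ by fin_cases i <;> assumption
  have hLU : IndepFun L U ℙ := hind.indepFun (i := 0) (j := 1) (by decide)
  have hZX : IndepFun (fun ω ↦ L ω - U ω) X ℙ :=
    (hind.indepFun_prodMk hmeas 0 1 2 (by decide) (by decide)).comp
      (measurable_fst.sub measurable_snd) measurable_id
  have hZ_nonneg : ∀ᵐ ω ∂ℙ, 0 ≤ L ω - U ω := by
    have hL0 := ae_of_ae_map hLm.aemeasurable (hL ▸ ae_nonneg_gammaMeasure k α)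
    have hU0 := ae_of_ae_map hUm.aemeasurable (hU ▸ ae_cond_mem measurableSet_Ioo)
    filter_upwards [hL0, hU0] with ω hLω hUω
    linarith [hUω.2]
  have hq : 0 ≤ (1 - exp (-μ * w)) / (μ * w) * (α / (α + μ)) ^ k := by
    have : exp (-μ * w) ≤ 1 := exp_le_one_iff.2 (by nlinarith)
    exact mul_nonneg (div_nonneg (by linarith) (by positivity)) (by positivity)
  have hcompl : {ω | U ω + X ω ≤ L ω} = {ω | L ω - U ω < X ω}ᶜ := by
    ext ω
    simp [sub_lt_iff_lt_add']
  rw [hcompl, prob_compl_eq_one_sub (measurableSet_lt (by fun_prop) hXm),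
    measure_lt_of_indepFun_of_map_eq_expMeasure (Z := fun ω ↦ L ω - U ω) hμ (hLm.sub hUm) hXm
      hZX hX hZ_nonneg,
    lintegral_exp_neg_mul_sub_of_indepFun hLm hUm hLU, hL, hU,
    lintegral_exp_neg_mul_gammaMeasure (by exact_mod_cast hk) hα (by linarith),
    lintegral_exp_mul_cond_Ioo (by linarith) hμ.ne', ← ENNReal.ofReal_mul (by positivity)]
  rw [rpow_natCast, mul_zero, exp_zero, sub_neg_eq_add, zero_add, mul_neg, ← neg_mul,
    mul_comm (_ ^ k), ← ENNReal.ofReal_one, ← ENNReal.ofReal_sub _ hq]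
end

section
/- Let $W \sim \mathrm{Exp}(\alpha)$ and for each $w > 0$ let $g(w) = \exp(-b(1 - e^{-\mu w}))$ with $b \ge 0$, $\mu > 0$. Then $\mathbb{E}[g(W)] = \frac{\alpha e^{-b}}{\mu}\sum_{j=0}^\infty \frac{b^j}{j!\,(\alpha/\mu + j)}$. -/
open MeasureTheory ProbabilityTheory Real
open scoped ENNReal NNReal

lemma rexp_eq_tsum (y : ℝ) : Real.exp y = ∑' n : ℕ, y ^ n / n.factorial := by
  rw [Real.exp_eq_exp_ℝ, NormedSpace.exp_eq_tsum_div]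

lemma integral_exp_neg_mul_Ioi' {c : ℝ} (hc : 0 < c) :
    ∫ x in Set.Ioi (0:ℝ), exp (-(c * x)) = 1 / c := by
  have h := integral_rpow_mul_exp_neg_mul_Ioi (a := 1) one_pos hc
  simp only [sub_self, Real.rpow_zero, one_mul, Real.rpow_one, Real.Gamma_one, mul_one] at h
  exact h

/-- For `W ~ Exp(α)`, `E[e^{-b(1-e^{-μW})}] = (α e^{-b}/μ) ∑_j b^j/(j!(α/μ+j))`. -/
theorem exp_moment_series
    {Ω : Type*} [MeasureSpace Ω] [IsProbabilityMeasure (ℙ : Measure Ω)]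
    (α μ b : ℝ) (hα : 0 < α) (hμ : 0 < μ) (hb : 0 ≤ b)
    (W : Ω → ℝ) (hWm : Measurable W) (hW : Measure.map W ℙ = expMeasure α) :
    ∫ ω, exp (-b * (1 - exp (-μ * W ω))) ∂ℙ =
      α * exp (-b) / μ * ∑' j : ℕ, b ^ j / ((Nat.factorial j : ℝ) * (α / μ + j)) := by
  have hgc : Continuous fun w : ℝ => exp (-b * (1 - exp (-μ * w))) := by continuity
  rw [← integral_map hWm.aemeasurable (hgc.aestronglyMeasurable), hW]
  have hmeq : expMeasure α =
      (volume : Measure ℝ).withDensity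
        (fun x => ((Real.toNNReal (exponentialPDFReal α x) : ℝ≥0) : ℝ≥0∞)) := rfl
  rw [hmeq, integral_withDensity_eq_integral_smul
    ((measurable_exponentialPDFReal α).real_toNNReal) _]
  have hpdf : ∀ x : ℝ, exponentialPDFReal α x = if 0 ≤ x then α * exp (-(α * x)) else 0 := by
    intro x
    simp [exponentialPDFReal, gammaPDFReal, Real.rpow_one, Real.Gamma_one]
  have hInd : (fun x => Real.toNNReal (exponentialPDFReal α x) • exp (-b * (1 - exp (-μ * x))))
      = Set.indicator (Set.Ici (0:ℝ))
        (fun x => α * exp (-(α * x)) * exp (-b * (1 - exp (-μ * x)))) := by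
    funext x
    rw [NNReal.smul_def, Real.coe_toNNReal _ (exponentialPDFReal_nonneg hα x), hpdf x]
    by_cases hx : (0:ℝ) ≤ x <;> simp [Set.indicator, hx]
  rw [hInd, integral_indicator measurableSet_Ici, integral_Ici_eq_integral_Ioi]
  -- now pure real-analysis computation
  set F : ℕ → ℝ → ℝ :=
    fun j x => α * exp (-b) * (b ^ j / j.factorial) * exp (-((α + j * μ) * x)) with hF
  have hc : ∀ j : ℕ, 0 < α + j * μ := fun j => by positivity
  have hpt : ∀ x : ℝ,
      α * exp (-(α * x)) * exp (-b * (1 - exp (-μ * x))) = ∑' j : ℕ, F j x := by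
    intro x
    have h1 : exp (-b * (1 - exp (-μ * x))) = exp (-b) * exp (b * exp (-μ * x)) := by
      rw [← Real.exp_add]; ring_nf
    rw [h1, rexp_eq_tsum (b * exp (-μ * x)),
      show α * exp (-(α * x)) * (exp (-b) * ∑' n : ℕ, (b * exp (-μ * x)) ^ n / n.factorial)
        = α * exp (-(α * x)) * exp (-b) * ∑' n : ℕ, (b * exp (-μ * x)) ^ n / n.factorial by ring,
      ← tsum_mul_left]
    refine tsum_congr fun j => ?_
    have he : rexp (-μ * x) ^ j = rexp (-((j : ℝ) * μ * x)) := by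
      rw [← Real.exp_nat_mul]; congr 1; ring
    have he2 : rexp (-(α * x)) * rexp (-((j : ℝ) * μ * x)) = rexp (-((α + (j : ℝ) * μ) * x)) := by
      rw [← Real.exp_add]; congr 1; ring
    simp only [hF, mul_pow, he]
    rw [show α * rexp (-(α * x)) * rexp (-b) * (b ^ j * rexp (-((j : ℝ) * μ * x)) / j.factorial)
        = α * rexp (-b) * (b ^ j / j.factorial) * (rexp (-(α * x)) * rexp (-((j : ℝ) * μ * x)))
        by ring, he2]
  have hFi : ∀ j : ℕ, IntegrableOn (F j) (Set.Ioi (0:ℝ)) := by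
    intro j
    have h := (exp_neg_integrableOn_Ioi 0 (hc j)).const_mul
      (α * exp (-b) * (b ^ j / j.factorial))
    rw [hF]
    exact IntegrableOn.congr_fun h (fun x _ => by rw [neg_mul]) measurableSet_Ioi
  have hFm : ∀ j : ℕ, AEStronglyMeasurable (F j) (volume.restrict (Set.Ioi (0:ℝ))) :=
    fun j => (hFi j).aestronglyMeasurable
  have hFint : ∀ j : ℕ, ∫ x in Set.Ioi (0:ℝ), F j x
      = α * exp (-b) * (b ^ j / j.factorial) * (1 / (α + j * μ)) := by
    intro j
    simp only [hF]
    rw [MeasureTheory.integral_const_mul, integral_exp_neg_mul_Ioi' (hc j)]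
  have hS : Summable (fun j : ℕ =>
      α * exp (-b) * (b ^ j / j.factorial) * (1 / (α + j * μ))) := by
    refine Summable.of_nonneg_of_le (fun j => by positivity) (fun j => ?_)
      (((Real.summable_pow_div_factorial b).mul_left (α * exp (-b))).mul_right (1 / α))
    have h1 : 1 / (α + (j : ℝ) * μ) ≤ 1 / α :=
      one_div_le_one_div_of_le hα (le_add_of_nonneg_right (by positivity))
    exact mul_le_mul_of_nonneg_left h1 (by positivity)
  have hlint : ∑' j : ℕ, ∫⁻ x in Set.Ioi (0:ℝ), ‖F j x‖₊ ∂volume ≠ ⊤ := by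
    have heq : ∀ j : ℕ, ∫⁻ x in Set.Ioi (0:ℝ), (‖F j x‖₊ : ℝ≥0∞) ∂volume
        = ENNReal.ofReal (∫ x in Set.Ioi (0:ℝ), F j x) := by
      intro j
      rw [MeasureTheory.ofReal_integral_eq_lintegral_ofReal (hFi j)
        (Filter.Eventually.of_forall fun x => by simp only [hF]; positivity)]
      exact lintegral_congr fun x => Real.enorm_eq_ofReal (by simp only [hF]; positivity)
    simp_rw [heq, hFint]
    rw [← ENNReal.ofReal_tsum_of_nonneg (fun j => by positivity) hS]
    exact ENNReal.ofReal_ne_top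
  simp_rw [hpt]
  rw [MeasureTheory.integral_tsum hFm hlint]
  rw [← tsum_mul_left]
  refine tsum_congr fun j => ?_
  rw [hFint j]
  have h2 : (α + j * μ) ≠ 0 := (hc j).ne'
  have h3 : ((j.factorial : ℝ)) ≠ 0 := by positivity
  have h4 : α / μ + j ≠ 0 := by positivity
  field_simp
end
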